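/- arXiv:0905.0812 — 3 statements merged into one kernel-verified Lean document; each statement's English description precedes it below -/
import Mathlib

section
/- Let 0 < p₀ ≤ p₁ ≤ ∞ and let a, b, c ∈ [0,∞). Then (a ⊞_{p₀} b) ⊞_{p₁} c ≤ a ⊞_{p₀} (b ⊞_{p₁} c). -/
open scoped ENNReal

/-- `t ⊞_p s`: for `p < ∞`, `(t^p + s^p)^(1/p)`; for `p = ∞`, `max t s`. -/
noncomputable def boxPlus (p : ℝ≥0∞) (t s : ℝ) : ℝ :=
  if p = ∞ then max t s else (t ^ p.toReal + s ^ p.toReal) ^ (1 / p.toReal)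

/-- The recursively defined seminorms `|||x|||_(k)` (0-indexed). -/
noncomputable def seqNorm (p : ℕ → ℝ≥0∞) (x : ℕ → ℝ) : ℕ → ℝ
  | 0 => boxPlus (p 0) |x 0| |x 1|
  | k + 1 => boxPlus (p (k + 1)) (seqNorm p x k) |x (k + 2)|

/-- `Φ_p(x) = lim_k |||x|||_(k)`, as the supremum of the nondecreasing sequence. -/
noncomputable def Phi (p : ℕ → ℝ≥0∞) (x : ℕ → ℝ) : ℝ≥0∞ :=
  ⨆ k, ENNReal.ofReal (seqNorm p x k)

/-- `x` is a bounded real sequence, i.e. `x ∈ ℓ^∞`. -/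
def IsBddSeq (x : ℕ → ℝ) : Prop := ∃ M : ℝ, ∀ n, |x n| ≤ M

/-- Membership in the variable exponent space `ℓ^{p(·)}`. -/
def MemVLp (p : ℕ → ℝ≥0∞) (x : ℕ → ℝ) : Prop := IsBddSeq x ∧ Phi p x < ⊤

/-! Raising both sides to the power `p₀` turns `⊞_{p₀}` into `+` and `⊞_{p₁}` into `⊞_{p₁/p₀}`.
With `u, v, w = a^p₀, b^p₀, c^p₀` and `r = p₁ / p₀ ≥ 1` the inequality becomes
`(u + v) ⊞_r (0 + w) ≤ u ⊞_r 0 + v ⊞_r w`: on nonnegative vectors `⊞_r` is the `ℓ^r` norm of `ℝ²`,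
so this is its triangle inequality. -/

lemma boxPlus_nonneg (p : ℝ≥0∞) {t s : ℝ} (ht : 0 ≤ t) (hs : 0 ≤ s) : 0 ≤ boxPlus p t s := by
  unfold boxPlus; split_ifs
  · exact le_max_of_le_left ht
  · positivity

lemma boxPlus_one (t s : ℝ) : boxPlus 1 t s = t + s := by
  simp [boxPlus]

lemma boxPlus_zero_right {p : ℝ≥0∞} (hp : p ≠ 0) {t : ℝ} (ht : 0 ≤ t) : boxPlus p t 0 = t := by
  unfold boxPlus; split_ifs with h
  · exact max_eq_left ht
  · have : p.toReal ≠ 0 := ENNReal.toReal_ne_zero.2 ⟨hp, h⟩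
    rw [Real.zero_rpow this, add_zero, one_div, Real.rpow_rpow_inv ht this]

lemma boxPlus_eq_norm {p : ℝ≥0∞} (hp : p ≠ 0) {t s : ℝ} (ht : 0 ≤ t) (hs : 0 ≤ s) :
    boxPlus p t s = ‖WithLp.toLp p (t, s)‖ := by
  unfold boxPlus; split_ifs with h
  · subst h; simp [WithLp.prod_norm_eq_sup, abs_of_nonneg ht, abs_of_nonneg hs]
  · rw [WithLp.prod_norm_eq_add (ENNReal.toReal_pos hp h)]
    simp [abs_of_nonneg ht, abs_of_nonneg hs]

lemma boxPlus_add_add_le {p : ℝ≥0∞} (hp : 1 ≤ p) {t s t' s' : ℝ} (ht : 0 ≤ t) (hs : 0 ≤ s)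
    (ht' : 0 ≤ t') (hs' : 0 ≤ s') :
    boxPlus p (t + t') (s + s') ≤ boxPlus p t s + boxPlus p t' s' := by
  have := Fact.mk hp
  have hp0 : p ≠ 0 := (zero_lt_one.trans_le hp).ne'
  rw [boxPlus_eq_norm hp0 ht hs, boxPlus_eq_norm hp0 ht' hs',
    boxPlus_eq_norm hp0 (add_nonneg ht ht') (add_nonneg hs hs')]
  exact norm_add_le (WithLp.toLp p (t, s)) (WithLp.toLp p (t', s'))

lemma boxPlus_rpow {p : ℝ≥0∞} (hp₀ : p ≠ 0) (hp : p ≠ ∞) (q : ℝ≥0∞) {t s : ℝ}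
    (ht : 0 ≤ t) (hs : 0 ≤ s) :
    boxPlus q t s ^ p.toReal = boxPlus (q / p) (t ^ p.toReal) (s ^ p.toReal) := by
  have hpos : 0 < p.toReal := ENNReal.toReal_pos hp₀ hp
  have hdiv : q / p = ∞ ↔ q = ∞ := by simp [ENNReal.div_eq_top, hp₀, hp]
  unfold boxPlus
  by_cases hq : q = ∞
  · rw [if_pos hq, if_pos (hdiv.2 hq)]
    exact Real.rpow_max ht hs hpos.le
  · rw [if_neg hq, if_neg (mt hdiv.1 hq), ENNReal.toReal_div,
      ← Real.rpow_mul ht, ← Real.rpow_mul hs,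
      mul_div_cancel₀ _ hpos.ne', ← Real.rpow_mul (by positivity), one_div_div, one_div_mul_eq_div]

theorem boxPlus_assoc_ineq (p₀ p₁ : ℝ≥0∞) (hp₀ : 0 < p₀) (hp : p₀ ≤ p₁)
    (a b c : ℝ) (ha : 0 ≤ a) (hb : 0 ≤ b) (hc : 0 ≤ c) :
    boxPlus p₁ (boxPlus p₀ a b) c ≤ boxPlus p₀ a (boxPlus p₁ b c) := by
  by_cases h₀ : p₀ = ∞
  · obtain rfl : p₁ = ∞ := top_le_iff.1 (h₀ ▸ hp)
    simp only [boxPlus, h₀, if_true, max_assoc, le_refl]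
  set p := p₀.toReal
  have hr : 1 ≤ p₁ / p₀ := (ENNReal.le_div_iff_mul_le (.inl hp₀.ne') (.inl h₀)).2 (by rwa [one_mul])
  have hab := boxPlus_nonneg p₀ ha hb
  have hbc := boxPlus_nonneg p₁ hb hc
  rw [← Real.rpow_le_rpow_iff (boxPlus_nonneg p₁ hab hc) (boxPlus_nonneg p₀ ha hbc)
      (ENNReal.toReal_pos hp₀.ne' h₀),
    boxPlus_rpow hp₀.ne' h₀ _ hab hc, boxPlus_rpow hp₀.ne' h₀ _ ha hbc,
    boxPlus_rpow hp₀.ne' h₀ _ ha hb, boxPlus_rpow hp₀.ne' h₀ _ hb hc, ENNReal.div_self hp₀.ne' h₀,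
    boxPlus_one, boxPlus_one]
  calc boxPlus (p₁ / p₀) (a ^ p + b ^ p) (c ^ p)
      = boxPlus (p₁ / p₀) (a ^ p + b ^ p) (0 + c ^ p) := by rw [zero_add]
    _ ≤ boxPlus (p₁ / p₀) (a ^ p) 0 + boxPlus (p₁ / p₀) (b ^ p) (c ^ p) :=
        boxPlus_add_add_le hr (by positivity) le_rfl (by positivity) (by positivity)
    _ = a ^ p + boxPlus (p₁ / p₀) (b ^ p) (c ^ p) := by
        rw [boxPlus_zero_right (zero_lt_one.trans_le hr).ne' (by positivity)]
end

section
/- Let p : ℕ → [1,∞] and let x belong to the closed linear span (with respect to the norm Φ_p) of the canonical unit vectors (e_n) in ℓ^{p(·)}. Then Φ_p(x − P_m(x)) → 0 as m → ∞, where P_m is the truncation to the first m coordinates. Hence (e_n) is a Schauder basis of its closed linear span. -/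
/-!
`Φ_p` is monotone in the absolute values of the coordinates, because each `⊞_p` is monotone.
If `z` vanishes from index `m₀` on and `m ≥ m₀`, then `x - P_m x` is zero below `m` and equals
`x = x - z` from `m` on, so `Φ_p(x - P_m x) ≤ Φ_p(x - z)`, which is as small as we like.
-/
open scoped ENNReal

/-- A finitely supported sequence, i.e. a member of the linear span of the
canonical unit vectors. -/
def FinSupported (z : ℕ → ℝ) : Prop := ∃ m : ℕ, ∀ j, m ≤ j → z j = 0

/-- Truncation `P_m` to the first `m` coordinates. -/
def truncSeq (m : ℕ) (x : ℕ → ℝ) : ℕ → ℝ := fun n => if n < m then x n else 0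

lemma boxPlus_mono (p : ℝ≥0∞) {t t' s s' : ℝ} (ht : 0 ≤ t) (hs : 0 ≤ s)
    (htt' : t ≤ t') (hss' : s ≤ s') : boxPlus p t s ≤ boxPlus p t' s' := by
  unfold boxPlus
  split
  · exact max_le_max htt' hss'
  · gcongr

lemma seqNorm_nonneg (p : ℕ → ℝ≥0∞) (x : ℕ → ℝ) (k : ℕ) : 0 ≤ seqNorm p x k := by
  induction k with
  | zero => exact boxPlus_nonneg _ (abs_nonneg _) (abs_nonneg _)
  | succ k ih => exact boxPlus_nonneg _ ih (abs_nonneg _)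

lemma seqNorm_mono (p : ℕ → ℝ≥0∞) {y w : ℕ → ℝ} (h : ∀ n, |y n| ≤ |w n|) (k : ℕ) :
    seqNorm p y k ≤ seqNorm p w k := by
  induction k with
  | zero => exact boxPlus_mono _ (abs_nonneg _) (abs_nonneg _) (h 0) (h 1)
  | succ k ih => exact boxPlus_mono _ (seqNorm_nonneg p y k) (abs_nonneg _) ih (h (k + 2))

lemma Phi_mono (p : ℕ → ℝ≥0∞) {y w : ℕ → ℝ} (h : ∀ n, |y n| ≤ |w n|) :
    Phi p y ≤ Phi p w :=
  iSup_mono fun k => ENNReal.ofReal_le_ofReal (seqNorm_mono p h k)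

lemma abs_sub_truncSeq_le {x z : ℕ → ℝ} {m₀ m : ℕ} (hz : ∀ j, m₀ ≤ j → z j = 0)
    (hm : m₀ ≤ m) (n : ℕ) : |(x - truncSeq m x) n| ≤ |(x - z) n| := by
  by_cases hn : n < m
  · simp [truncSeq, hn]
  · simp [truncSeq, hn, hz n (hm.trans (not_lt.mp hn))]

lemma eventually_Phi_sub_truncSeq_le {p : ℕ → ℝ≥0∞} {x z : ℕ → ℝ} (hz : FinSupported z) :
    ∀ᶠ m in Filter.atTop, Phi p (x - truncSeq m x) ≤ Phi p (x - z) := by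
  obtain ⟨m₀, hm₀⟩ := hz
  filter_upwards [Filter.eventually_ge_atTop m₀] with m hm
  exact Phi_mono p (abs_sub_truncSeq_le hm₀ hm)

theorem truncation_tendsto_of_mem_closed_span_general (p : ℕ → ℝ≥0∞)
    (x : ℕ → ℝ)
    (hspan : ∀ ε : ℝ, 0 < ε → ∃ z : ℕ → ℝ, FinSupported z ∧
      Phi p (x - z) < ENNReal.ofReal ε) :
    Filter.Tendsto (fun m => Phi p (x - truncSeq m x)) Filter.atTop (nhds 0) := by
  rw [ENNReal.tendsto_nhds_zero]
  intro ε hε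
  rcases eq_or_ne ε ⊤ with rfl | hε_top
  · exact Filter.Eventually.of_forall fun _ => le_top
  obtain ⟨z, hz, hxz⟩ := hspan ε.toReal (ENNReal.toReal_pos hε.ne' hε_top)
  filter_upwards [eventually_Phi_sub_truncSeq_le (p := p) (x := x) hz] with m hm
  calc Phi p (x - truncSeq m x) ≤ Phi p (x - z) := hm
    _ ≤ ENNReal.ofReal ε.toReal := hxz.le
    _ = ε := ENNReal.ofReal_toReal hε_top

theorem truncation_tendsto_of_mem_closed_span (p : ℕ → ℝ≥0∞) (hp : ∀ n, 1 ≤ p n)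
    (x : ℕ → ℝ) (hx : MemVLp p x)
    (hspan : ∀ ε : ℝ, 0 < ε → ∃ z : ℕ → ℝ, FinSupported z ∧
      Phi p (x - z) < ENNReal.ofReal ε) :
    Filter.Tendsto (fun m => Phi p (x - truncSeq m x)) Filter.atTop (nhds 0) :=
  truncation_tendsto_of_mem_closed_span_general p x hspan
end

section
/- Let p, q : ℕ → [1,∞] and ε > 0. Suppose that for every k ∈ ℕ the value q(k) is a limit point of the sequence (p(n))_n in the compact space [1,∞] (equivalently, liminf_{n→∞} |q(k) − p(n)| = 0 in the metric of the one-point compactification of [1,∞)). Then there is a strictly increasing sequence (n_k) of positive integers such that the placement map φ — sending y = (y_k) to the sequence with y₁ at coordinate n₁, y_{k+1} at coordinate n_k + 1 for k ≥ 1, and zero elsewhere — satisfies (1+ε)^{-1}·Φ_q(y) ≤ Φ_p(φ(y)) ≤ (1+ε)·Φ_q(y) for every bounded sequence y; in particular φ defines a (1+ε)²-isomorphic embedding of ℓ^{q(·)} into ℓ^{p(·)}. -/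
open scoped ENNReal

open scoped Classical in
/-- The placement map: `(place n y) (n 0) = y 0`, `(place n y) (n k + 1) = y (k+1)`,
and all other coordinates vanish. -/
noncomputable def place (n : ℕ → ℕ) (y : ℕ → ℝ) : ℕ → ℝ := fun j =>
  if j = n 0 then y 0
  else if h : ∃ k, j = n k + 1 then y (h.choose + 1)
  else 0

/-!
Placing `y` at the positions `n 0, n 0 + 1, n 1 + 1, …` only inserts zero coordinates, and a zero
coordinate does not change the running norm `|||·|||_(k)`; hence `Φ_p (place n y) = Φ_{p ∘ n} y`.
On `ℝ²` the norms `⊞_a` and `⊞_b` are within a factor `2 ^ |1/a - 1/b|` of each other, so by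
induction `Φ_{p ∘ n}` and `Φ_q` are within the factor `2 ^ ∑ δ_k` whenever
`|1/p(n k) - 1/q k| ≤ δ_k`. Since `a ↦ 1/a` is continuous at `q k ≠ 0` and `q k` is a cluster value
of `p`, a strictly increasing `n` with `δ_k = log₂(1 + ε) / 2 ^ (k + 1)` exists, which gives the
factor `1 + ε`.
-/

open scoped NNReal
open Finset Filter

noncomputable def nnBoxPlus (p : ℝ≥0∞) (t s : ℝ≥0) : ℝ≥0 :=
  if p = ∞ then max t s else (t ^ p.toReal + s ^ p.toReal) ^ (1 / p.toReal)

/-- `prefixNorm p x k = |||(x 0, …, x k)|||`, so `seqNorm p x k = prefixNorm p x (k + 1)`. -/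
noncomputable def prefixNorm (p : ℕ → ℝ≥0∞) (x : ℕ → ℝ) : ℕ → ℝ≥0
  | 0 => ‖x 0‖₊
  | k + 1 => nnBoxPlus (p k) (prefixNorm p x k) ‖x (k + 1)‖₊

section nnBoxPlus

variable {p a b : ℝ≥0∞} {t s t' s' : ℝ≥0}

lemma nnBoxPlus_top : nnBoxPlus ∞ t s = max t s := if_pos rfl

lemma nnBoxPlus_of_ne_top (hp : p ≠ ∞) :
    nnBoxPlus p t s = (t ^ p.toReal + s ^ p.toReal) ^ (1 / p.toReal) := if_neg hp

lemma coe_nnBoxPlus : (nnBoxPlus p t s : ℝ) = boxPlus p t s := by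
  unfold nnBoxPlus boxPlus
  split_ifs <;> simp [NNReal.coe_rpow]

lemma nnBoxPlus_zero_right (hp : p ≠ 0) : nnBoxPlus p t 0 = t := by
  rcases eq_or_ne p ∞ with rfl | hp'
  · simp [nnBoxPlus_top]
  · have hr := (ENNReal.toReal_pos hp hp').ne'
    rw [nnBoxPlus_of_ne_top hp', NNReal.zero_rpow hr, add_zero, one_div, NNReal.rpow_rpow_inv hr]

lemma nnBoxPlus_zero_left (hp : p ≠ 0) : nnBoxPlus p 0 s = s := by
  rcases eq_or_ne p ∞ with rfl | hp'
  · simp [nnBoxPlus_top]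
  · have hr := (ENNReal.toReal_pos hp hp').ne'
    rw [nnBoxPlus_of_ne_top hp', NNReal.zero_rpow hr, zero_add, one_div, NNReal.rpow_rpow_inv hr]

@[gcongr]
lemma nnBoxPlus_le_nnBoxPlus (ht : t ≤ t') (hs : s ≤ s') : nnBoxPlus p t s ≤ nnBoxPlus p t' s' := by
  unfold nnBoxPlus
  split_ifs
  · exact max_le_max ht hs
  · gcongr

lemma le_nnBoxPlus_left (hp : p ≠ 0) : t ≤ nnBoxPlus p t s :=
  (nnBoxPlus_zero_right hp).symm.trans_le (nnBoxPlus_le_nnBoxPlus le_rfl zero_le)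

lemma le_nnBoxPlus_right (hp : p ≠ 0) : s ≤ nnBoxPlus p t s :=
  (nnBoxPlus_zero_left hp).symm.trans_le (nnBoxPlus_le_nnBoxPlus zero_le le_rfl)

lemma nnBoxPlus_mul_mul (hp : p ≠ 0) (c : ℝ≥0) :
    nnBoxPlus p (c * t) (c * s) = c * nnBoxPlus p t s := by
  rcases eq_or_ne p ∞ with rfl | hp'
  · simp only [nnBoxPlus_top, mul_max_of_nonneg t s c.2]
  · rw [nnBoxPlus_of_ne_top hp', nnBoxPlus_of_ne_top hp', NNReal.mul_rpow, NNReal.mul_rpow,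
      ← mul_add, NNReal.mul_rpow, one_div, NNReal.rpow_rpow_inv (ENNReal.toReal_pos hp hp').ne']

lemma nnBoxPlus_antitone_exponent (ha : a ≠ 0) (hab : a ≤ b) :
    nnBoxPlus b t s ≤ nnBoxPlus a t s := by
  rcases eq_or_ne b ∞ with rfl | hb
  · exact nnBoxPlus_top.trans_le (max_le (le_nnBoxPlus_left ha) (le_nnBoxPlus_right ha))
  · rw [nnBoxPlus_of_ne_top hb, nnBoxPlus_of_ne_top (ne_top_of_le_ne_top hb hab)]
    exact NNReal.rpow_add_rpow_le t s (ENNReal.toReal_pos ha (ne_top_of_le_ne_top hb hab))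
      (ENNReal.toReal_mono hb hab)

lemma nnBoxPlus_le_two_rpow_mul (ha : a ≠ 0) (hab : a ≤ b) :
    nnBoxPlus a t s ≤ 2 ^ ((a⁻¹).toReal - (b⁻¹).toReal) * nnBoxPlus b t s := by
  rcases eq_or_ne a ∞ with rfl | ha'
  · simp [top_le_iff.mp hab, nnBoxPlus_top]
  have hr := ENNReal.toReal_pos ha ha'
  rw [nnBoxPlus_of_ne_top ha', ENNReal.toReal_inv]
  set r := a.toReal
  rcases eq_or_ne b ∞ with rfl | hb
  · have hsum : t ^ r + s ^ r ≤ 2 * max t s ^ r := by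
      rw [two_mul]; gcongr <;> simp
    calc (t ^ r + s ^ r) ^ (1 / r) ≤ (2 * max t s ^ r) ^ (1 / r) := by gcongr
      _ = 2 ^ (r⁻¹ - (∞⁻¹ : ℝ≥0∞).toReal) * nnBoxPlus ∞ t s := by
        rw [NNReal.mul_rpow, one_div, NNReal.rpow_rpow_inv hr.ne', nnBoxPlus_top]; simp
  · rw [nnBoxPlus_of_ne_top hb, ENNReal.toReal_inv]
    set r' := b.toReal
    have hr' : 0 < r' := ENNReal.toReal_pos (ne_bot_of_le_ne_bot ha hab) hb
    have hrr' : r ≤ r' := ENNReal.toReal_mono hb hab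
    -- convexity of `u ↦ u ^ (r'/r)` applied to `u = t ^ r, s ^ r`
    have key := NNReal.rpow_add_le_mul_rpow_add_rpow (t ^ r) (s ^ r) ((one_le_div hr).mpr hrr')
    rw [← NNReal.rpow_mul, ← NNReal.rpow_mul, mul_div_cancel₀ _ hr.ne'] at key
    calc (t ^ r + s ^ r) ^ (1 / r) = ((t ^ r + s ^ r) ^ (r' / r)) ^ (1 / r') := by
          rw [← NNReal.rpow_mul]; congr 1; field_simp
      _ ≤ (2 ^ (r' / r - 1) * (t ^ r' + s ^ r')) ^ (1 / r') := by gcongr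
      _ = 2 ^ (r⁻¹ - r'⁻¹) * (t ^ r' + s ^ r') ^ (1 / r') := by
          rw [NNReal.mul_rpow, ← NNReal.rpow_mul]; congr 2; field_simp

lemma nnBoxPlus_le_two_rpow_abs_mul (ha : a ≠ 0) (hb : b ≠ 0) :
    nnBoxPlus a t s ≤ 2 ^ |(a⁻¹).toReal - (b⁻¹).toReal| * nnBoxPlus b t s := by
  rcases le_total a b with hab | hba
  · refine (nnBoxPlus_le_two_rpow_mul ha hab).trans ?_
    gcongr
    · exact one_le_two
    · exact le_abs_self _
  · refine (nnBoxPlus_antitone_exponent hb hba).trans (le_mul_of_one_le_left zero_le ?_)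
    exact NNReal.one_le_rpow one_le_two (abs_nonneg _)

end nnBoxPlus

section prefixNorm

lemma seqNorm_eq_prefixNorm (p : ℕ → ℝ≥0∞) (x : ℕ → ℝ) (k : ℕ) :
    seqNorm p x k = prefixNorm p x (k + 1) := by
  induction k with
  | zero => simp [seqNorm, prefixNorm, coe_nnBoxPlus]
  | succ k ih =>
    change boxPlus (p (k + 1)) (seqNorm p x k) |x (k + 2)| = _
    rw [ih, ← Real.norm_eq_abs, ← coe_nnnorm, ← coe_nnBoxPlus]
    rfl

lemma Phi_eq_iSup_prefixNorm (p : ℕ → ℝ≥0∞) (x : ℕ → ℝ) :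
    Phi p x = ⨆ k, (prefixNorm p x (k + 1) : ℝ≥0∞) := by
  simp only [Phi, seqNorm_eq_prefixNorm, ENNReal.ofReal_coe_nnreal]

variable {p : ℕ → ℝ≥0∞} {x : ℕ → ℝ}

lemma prefixNorm_monotone (hp : ∀ k, p k ≠ 0) : Monotone (prefixNorm p x) :=
  monotone_nat_of_le_succ fun k => le_nnBoxPlus_left (hp k)

lemma prefixNorm_of_forall_lt_eq_zero (hp : ∀ k, p k ≠ 0) {b : ℕ} (hx : ∀ i < b, x i = 0) :
    prefixNorm p x b = ‖x b‖₊ := by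
  induction b with
  | zero => rfl
  | succ b ih =>
    rw [prefixNorm, ih fun i hi => hx i (by omega), hx b (by omega), nnnorm_zero,
      nnBoxPlus_zero_left (hp b)]

lemma prefixNorm_eq_of_forall_mem_Ioc_eq_zero (hp : ∀ k, p k ≠ 0) {a b : ℕ} (hab : a ≤ b)
    (hx : ∀ i ∈ Set.Ioc a b, x i = 0) : prefixNorm p x b = prefixNorm p x a := by
  induction b, hab using Nat.le_induction with
  | base => rfl
  | succ b hab ih =>
    rw [prefixNorm, hx (b + 1) ⟨by omega, le_rfl⟩, nnnorm_zero, nnBoxPlus_zero_right (hp b),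
      ih fun i hi => hx i ⟨hi.1, by linarith [hi.2]⟩]

lemma prefixNorm_le_two_rpow_sum_mul {r q : ℕ → ℝ≥0∞} (hr : ∀ k, r k ≠ 0) (hq : ∀ k, q k ≠ 0)
    {δ : ℕ → ℝ} (hδ : ∀ k, |((r k)⁻¹).toReal - ((q k)⁻¹).toReal| ≤ δ k) (y : ℕ → ℝ) (K : ℕ) :
    prefixNorm r y K ≤ 2 ^ (∑ k ∈ range K, δ k) * prefixNorm q y K := by
  induction K with
  | zero => simp [prefixNorm]
  | succ K ih =>
    set C : ℝ≥0 := 2 ^ (∑ k ∈ range K, δ k)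
    have hC : 1 ≤ C :=
      NNReal.one_le_rpow one_le_two (sum_nonneg fun k _ => (abs_nonneg _).trans (hδ k))
    calc prefixNorm r y (K + 1)
        ≤ nnBoxPlus (r K) (C * prefixNorm q y K) (C * ‖y (K + 1)‖₊) :=
          nnBoxPlus_le_nnBoxPlus ih (le_mul_of_one_le_left zero_le hC)
      _ = C * nnBoxPlus (r K) (prefixNorm q y K) ‖y (K + 1)‖₊ := nnBoxPlus_mul_mul (hr K) C
      _ ≤ C * (2 ^ δ K * prefixNorm q y (K + 1)) := by
          have h2 : (2 : ℝ≥0) ^ |((r K)⁻¹).toReal - ((q K)⁻¹).toReal| ≤ 2 ^ δ K :=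
            NNReal.rpow_le_rpow_of_exponent_le one_le_two (hδ K)
          grw [nnBoxPlus_le_two_rpow_abs_mul (hr K) (hq K), h2]
          rfl
      _ = 2 ^ (∑ k ∈ range (K + 1), δ k) * prefixNorm q y (K + 1) := by
          rw [sum_range_succ, NNReal.rpow_add two_ne_zero, mul_assoc]

lemma Phi_le_two_rpow_mul {r q : ℕ → ℝ≥0∞} (hr : ∀ k, r k ≠ 0) (hq : ∀ k, q k ≠ 0)
    {δ : ℕ → ℝ} (hδ : ∀ k, |((r k)⁻¹).toReal - ((q k)⁻¹).toReal| ≤ δ k)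
    {D : ℝ} (hD : ∀ K, ∑ k ∈ range K, δ k ≤ D) (y : ℕ → ℝ) :
    Phi r y ≤ ((2 ^ D : ℝ≥0) : ℝ≥0∞) * Phi q y := by
  rw [Phi_eq_iSup_prefixNorm, Phi_eq_iSup_prefixNorm, ENNReal.mul_iSup]
  refine iSup_mono fun K => ?_
  rw [← ENNReal.coe_mul, ENNReal.coe_le_coe]
  calc prefixNorm r y (K + 1) ≤ 2 ^ (∑ k ∈ range (K + 1), δ k) * prefixNorm q y (K + 1) :=
        prefixNorm_le_two_rpow_sum_mul hr hq hδ y (K + 1)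
    _ ≤ 2 ^ D * prefixNorm q y (K + 1) := by
        gcongr
        exacts [one_le_two, hD (K + 1)]

end prefixNorm

section place

lemma place_apply_zero (n : ℕ → ℕ) (y : ℕ → ℝ) : place n y (n 0) = y 0 := if_pos rfl

variable {n : ℕ → ℕ} {y : ℕ → ℝ}

lemma place_apply_add_one (hn : StrictMono n) (k : ℕ) : place n y (n k + 1) = y (k + 1) := by
  have hex : ∃ j, n k + 1 = n j + 1 := ⟨k, rfl⟩
  rw [place, if_neg (by have := hn.monotone k.zero_le; omega), dif_pos hex,
    hn.injective (Nat.succ_injective hex.choose_spec).symm]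

lemma place_eq_zero {j : ℕ} (h0 : j ≠ n 0) (h : ∀ k, j ≠ n k + 1) : place n y j = 0 := by
  rw [place, if_neg h0, dif_neg (not_exists.mpr h)]

variable {p : ℕ → ℝ≥0∞}

lemma prefixNorm_place_apply_zero (hp : ∀ k, p k ≠ 0) (hn : StrictMono n) :
    prefixNorm p (place n y) (n 0) = ‖y 0‖₊ := by
  rw [prefixNorm_of_forall_lt_eq_zero hp, place_apply_zero]
  intro i hi
  exact place_eq_zero hi.ne fun k => by have := hn.monotone k.zero_le; omega

lemma prefixNorm_place_apply_add_one (hp : ∀ k, p k ≠ 0) (hn : StrictMono n) (k : ℕ) :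
    prefixNorm p (place n y) (n k + 1) = prefixNorm (p ∘ n) y (k + 1) := by
  induction k with
  | zero =>
    rw [prefixNorm, prefixNorm_place_apply_zero hp hn, place_apply_add_one hn]; rfl
  | succ k ih =>
    have hgap : ∀ i ∈ Set.Ioc (n k + 1) (n (k + 1)), place n y i = 0 := by
      intro i ⟨hki, hik⟩
      refine place_eq_zero (by have := hn.monotone k.zero_le; omega) fun j hj => ?_
      rcases le_or_gt j k with hjk | hkj
      · have := hn.monotone hjk; omega
      · have := hn.monotone (show k + 1 ≤ j by omega); omega
    rw [prefixNorm, prefixNorm_eq_of_forall_mem_Ioc_eq_zero hp (hn k.lt_succ_self) hgap, ih,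
      place_apply_add_one hn, prefixNorm]; rfl

lemma Phi_place (hp : ∀ k, p k ≠ 0) (hn : StrictMono n) (y : ℕ → ℝ) :
    Phi p (place n y) = Phi (p ∘ n) y := by
  have hmono : Monotone fun m => (prefixNorm p (place n y) (m + 1) : ℝ≥0∞) :=
    fun a b hab => ENNReal.coe_le_coe.mpr (prefixNorm_monotone hp (by omega))
  rw [Phi_eq_iSup_prefixNorm, Phi_eq_iSup_prefixNorm,
    ← hmono.iSup_comp_tendsto_atTop hn.tendsto_atTop]
  simp only [prefixNorm_place_apply_add_one hp hn]

end place

lemma exists_strictMono_abs_inv_toReal_sub_lt {p q : ℕ → ℝ≥0∞} (hq : ∀ k, q k ≠ 0)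
    (hcluster : ∀ k, MapClusterPt (q k) atTop p) {δ : ℕ → ℝ} (hδ : ∀ k, 0 < δ k) :
    ∃ n : ℕ → ℕ, StrictMono n ∧ ∀ k, |((p (n k))⁻¹).toReal - ((q k)⁻¹).toReal| < δ k := by
  refine extraction_forall_of_frequently
    (P := fun k m => |((p m)⁻¹).toReal - ((q k)⁻¹).toReal| < δ k) fun k => ?_
  have hcont : ContinuousAt (fun a : ℝ≥0∞ => (a⁻¹).toReal) (q k) :=
    (ENNReal.continuousAt_toReal (ENNReal.inv_ne_top.mpr (hq k))).comp
      continuous_inv.continuousAt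
  simpa only [Metric.mem_ball, Real.dist_eq, Function.comp_apply] using
    ((hcluster k).continuousAt_comp hcont).frequently (Metric.ball_mem_nhds _ (hδ k))

lemma sum_range_div_two_pow_succ_le {D : ℝ} (hD : 0 ≤ D) (K : ℕ) :
    ∑ k ∈ range K, D / 2 ^ (k + 1) ≤ D :=
  calc ∑ k ∈ range K, D / 2 ^ (k + 1) = D / 2 * ∑ k ∈ range K, (1 / 2 : ℝ) ^ k := by
        rw [mul_sum]; exact sum_congr rfl fun k _ => by rw [one_div_pow, pow_succ]; field_simp
    _ ≤ D / 2 * 2 := by gcongr; exact sum_geometric_two_le K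
    _ = D := by ring

/-- If every value `q k` is a limit point of the sequence `(p n)` in `[1,∞]`,
then for every `ε > 0` the placement map along a suitable strictly increasing
sequence is a `(1+ε)`-embedding of `ℓ^{q(·)}` into `ℓ^{p(·)}`. -/
theorem embedding_lemma (p q : ℕ → ℝ≥0∞) (hp : ∀ m, 1 ≤ p m) (hq : ∀ k, 1 ≤ q k)
    (hcluster : ∀ k, MapClusterPt (q k) Filter.atTop p)
    (ε : ℝ) (hε : 0 < ε) :
    ∃ n : ℕ → ℕ, StrictMono n ∧ ∀ y : ℕ → ℝ, IsBddSeq y →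
      (ENNReal.ofReal (1 + ε))⁻¹ * Phi q y ≤ Phi p (place n y) ∧
      Phi p (place n y) ≤ ENNReal.ofReal (1 + ε) * Phi q y := by
  have hp0 : ∀ m, p m ≠ 0 := fun m => (one_pos.trans_le (hp m)).ne'
  have hq0 : ∀ k, q k ≠ 0 := fun k => (one_pos.trans_le (hq k)).ne'
  set D := Real.logb 2 (1 + ε)
  have hD : 0 < D := Real.logb_pos one_lt_two (by linarith)
  have hsum := sum_range_div_two_pow_succ_le hD.le
  have h2D : (((2 : ℝ≥0) ^ D : ℝ≥0) : ℝ≥0∞) = ENNReal.ofReal (1 + ε) := by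
    rw [ENNReal.ofReal, ENNReal.coe_inj, ← NNReal.coe_inj, NNReal.coe_rpow, NNReal.coe_ofNat,
      Real.rpow_logb two_pos (by norm_num) (by linarith), Real.coe_toNNReal _ (by linarith)]
  obtain ⟨n, hn, hclose⟩ :=
    exists_strictMono_abs_inv_toReal_sub_lt hq0 hcluster (δ := fun k => D / 2 ^ (k + 1))
      fun k => by positivity
  refine ⟨n, hn, fun y _ => ?_⟩
  rw [Phi_place hp0 hn, ← h2D]
  constructor
  · rw [ENNReal.inv_mul_le_iff (by simp [(NNReal.rpow_pos two_pos).ne']) ENNReal.coe_ne_top]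
    exact Phi_le_two_rpow_mul hq0 (fun k => hp0 (n k))
      (fun k => by rw [abs_sub_comm]; exact (hclose k).le) hsum y
  · exact Phi_le_two_rpow_mul (fun k => hp0 (n k)) hq0 (fun k => (hclose k).le) hsum y
end
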